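/- Let t ≥ 1 be an integer and Z a random variable on {0,1}^m. If for every S ⊆ [m] with |S| ≥ t, |Pr[⊕_{i∈S} Z_i = 0] − Pr[⊕_{i∈S} Z_i = 1]| ≤ (2m)^{−|S|}, then the min-entropy of Z satisfies H_∞(Z) ≥ m − t·log₂ m − 1. -/

import Mathlib

/-- The probability, under the law `μ` of a random bitstring `Z ∈ {0,1}^m`, that the XOR of
the bits indexed by `S` equals `b`. -/
noncomputable def prParity {m : ℕ} (μ : (Fin m → Bool) → ℝ) (S : Finset (Fin m))
    (b : ZMod 2) : ℝ :=
  ∑ z : Fin m → Bool, if (∑ i ∈ S, if z i then (1 : ZMod 2) else 0) = b then μ z else 0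

/-!
Fourier inversion on the Boolean cube writes `2^m Pr[Z = z]` as `∑_S ±μ̂(S)`, where the Walsh
coefficient `μ̂(S)` is exactly the bias of the parity `⊕_{i∈S} Z_i`. Every coefficient is at most
`1` in absolute value, and for `|S| ≥ t` it is at most `(2m)^{-|S|}`. There are fewer than `m^t`
sets with `|S| < t`, while `∑_S (2m)^{-|S|} ≤ ∑_k (m choose k) (2m)^{-k} ≤ ∑_k 2^{-k} ≤ 2`,
so `Pr[Z = z] ≤ 2 m^t / 2^m`, which is the claimed min-entropy bound.
-/

namespace BoolCube

open Finset

variable {ι : Type*}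

def walsh (S : Finset ι) (z : ι → Bool) : ℝ :=
  ∏ i ∈ S, if z i then -1 else 1

def walshCoeff [Fintype ι] [DecidableEq ι] (μ : (ι → Bool) → ℝ) (S : Finset ι) : ℝ :=
  ∑ x, μ x * walsh S x

lemma abs_walsh (S : Finset ι) (z : ι → Bool) : |walsh S z| = 1 := by
  rw [walsh, abs_prod]
  exact prod_eq_one fun i _ => by split <;> simp

lemma walsh_eq_ite (S : Finset ι) (z : ι → Bool) :
    walsh S z = if (∑ i ∈ S, if z i then (1 : ZMod 2) else 0) = 0 then 1 else -1 := by
  classical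
  induction S using Finset.induction_on with
  | empty => simp [walsh]
  | insert a S ha ih =>
    rw [walsh, prod_insert ha, ← walsh, ih, sum_insert ha]
    generalize (∑ i ∈ S, if z i then (1 : ZMod 2) else 0) = p
    obtain rfl | rfl := (by decide : ∀ p : ZMod 2, p = 0 ∨ p = 1) p <;>
      cases z a <;> simp [show (1 : ZMod 2) + 1 = 0 from rfl]

variable [Fintype ι]

lemma sum_walsh_mul_walsh (z x : ι → Bool) :
    ∑ S : Finset ι, walsh S z * walsh S x = if x = z then 2 ^ Fintype.card ι else 0 := by
  have hprod (S : Finset ι) :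
      walsh S z * walsh S x = ∏ i ∈ S, if z i = x i then (1 : ℝ) else -1 := by
    rw [walsh, walsh, ← prod_mul_distrib]
    exact prod_congr rfl fun i _ => by cases z i <;> cases x i <;> simp
  -- `∑_S ∏_{i ∈ S} g i = ∏_i (g i + 1)`, and the factor at any `i` with `z i ≠ x i` vanishes
  simp_rw [hprod, ← powerset_univ, ← prod_add_one]
  split_ifs with h
  · subst h
    norm_num
  · obtain ⟨i, hi⟩ := Function.ne_iff.mp (Ne.symm h)
    exact prod_eq_zero (mem_univ i) (by simp [hi])

variable [DecidableEq ι]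

lemma two_pow_card_mul_eq_sum_walsh_mul_walshCoeff (μ : (ι → Bool) → ℝ)
    (z : ι → Bool) :
    2 ^ Fintype.card ι * μ z = ∑ S, walsh S z * walshCoeff μ S := by
  simp_rw [walshCoeff, mul_sum, mul_left_comm (walsh _ z)]
  rw [sum_comm]
  simp_rw [← mul_sum, sum_walsh_mul_walsh, mul_ite, mul_zero, sum_ite_eq', if_pos (mem_univ z),
    mul_comm]

lemma abs_walshCoeff_le_sum {μ : (ι → Bool) → ℝ} (hμ0 : ∀ x, 0 ≤ μ x) (S : Finset ι) :
    |walshCoeff μ S| ≤ ∑ x, μ x :=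
  (abs_sum_le_sum_abs _ _).trans_eq <| sum_congr rfl fun x _ => by
    rw [abs_mul, abs_walsh, mul_one, abs_of_nonneg (hμ0 x)]

lemma two_pow_card_mul_le_sum_abs_walshCoeff (μ : (ι → Bool) → ℝ) (z : ι → Bool) :
    2 ^ Fintype.card ι * μ z ≤ ∑ S, |walshCoeff μ S| := by
  rw [two_pow_card_mul_eq_sum_walsh_mul_walshCoeff]
  exact sum_le_sum fun S _ => (le_abs_self _).trans_eq (by rw [abs_mul, abs_walsh, one_mul])

omit [DecidableEq ι] in
lemma sum_ite_card_lt_le_two_mul_pow (hn : 2 ≤ Fintype.card ι) (t : ℕ) :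
    ∑ S : Finset ι, (if S.card < t then 1 else 1 / (2 * (Fintype.card ι : ℝ)) ^ S.card) ≤
      2 * (Fintype.card ι : ℝ) ^ t := by
  set n := Fintype.card ι
  rw [← powerset_univ,
    sum_powerset_apply_card fun k => if k < t then (1 : ℝ) else 1 / (2 * (n : ℝ)) ^ k, card_univ]
  have hterm (k : ℕ) : n.choose k • (if k < t then 1 else 1 / (2 * (n : ℝ)) ^ k) ≤
      (if k < t then (n : ℝ) ^ k else 0) + (1 / 2) ^ k := by
    have hchoose : (n.choose k : ℝ) ≤ n ^ k := by exact_mod_cast Nat.choose_le_pow n k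
    rw [nsmul_eq_mul]
    split_ifs
    · linarith [pow_nonneg (by norm_num : (0 : ℝ) ≤ 1 / 2) k]
    · rw [zero_add, mul_one_div, div_le_iff₀ (by positivity), ← mul_pow]
      rwa [one_div, inv_mul_cancel_left₀ two_ne_zero]
  have hsmall : ∑ k ∈ range (n + 1), (if k < t then (n : ℝ) ^ k else 0) ≤ n ^ t - 1 := by
    have := Nat.geomSum_lt hn (s := (range (n + 1)).filter (· < t)) (n := t) (by simp)
    rw [← sum_filter, le_sub_iff_add_le]
    exact_mod_cast this
  calc _ ≤ ∑ k ∈ range (n + 1), ((if k < t then (n : ℝ) ^ k else 0) + (1 / 2) ^ k) :=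
        sum_le_sum fun k _ => hterm k
    _ ≤ (n ^ t - 1) + 2 := by
        rw [sum_add_distrib]
        exact add_le_add hsmall (sum_geometric_two_le _)
    _ ≤ 2 * n ^ t := by linarith [one_le_pow₀ (by norm_cast; omega : (1 : ℝ) ≤ n) (n := t)]

lemma le_two_mul_pow_div_of_abs_walshCoeff_le {μ : (ι → Bool) → ℝ} {t : ℕ}
    (hn : 2 ≤ Fintype.card ι) (hμ0 : ∀ x, 0 ≤ μ x) (hμ1 : ∑ x, μ x = 1)
    (hcoeff : ∀ S : Finset ι, t ≤ S.card →
      |walshCoeff μ S| ≤ 1 / (2 * (Fintype.card ι : ℝ)) ^ S.card) (z : ι → Bool) :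
    μ z ≤ 2 * (Fintype.card ι : ℝ) ^ t / 2 ^ Fintype.card ι := by
  rw [le_div_iff₀ (by positivity), mul_comm]
  calc _ ≤ ∑ S, |walshCoeff μ S| := two_pow_card_mul_le_sum_abs_walshCoeff μ z
    _ ≤ _ := sum_le_sum fun S _ => by
        split_ifs with h
        · exact hμ1 ▸ abs_walshCoeff_le_sum hμ0 S
        · exact hcoeff S (not_lt.mp h)
    _ ≤ _ := sum_ite_card_lt_le_two_mul_pow hn t

end BoolCube

open BoolCube in
lemma sub_prParity_eq_walshCoeff {m : ℕ} (μ : (Fin m → Bool) → ℝ) (S : Finset (Fin m)) :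
    prParity μ S 0 - prParity μ S 1 = walshCoeff μ S := by
  rw [prParity, prParity, walshCoeff, ← Finset.sum_sub_distrib]
  refine Finset.sum_congr rfl fun x _ => ?_
  rw [walsh_eq_ite]
  obtain h | h := (by decide : ∀ p : ZMod 2, p = 0 ∨ p = 1)
    (∑ i ∈ S, if x i then (1 : ZMod 2) else 0) <;> simp [h]

theorem stmt8 {m : ℕ} (hm : 2 ≤ m) (t : ℕ)
    (μ : (Fin m → Bool) → ℝ) (hμ0 : ∀ z, 0 ≤ μ z) (hμ1 : ∑ z, μ z = 1)
    (hbias : ∀ S : Finset (Fin m), t ≤ S.card →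
      |prParity μ S 0 - prParity μ S 1| ≤ 1 / (2 * (m : ℝ)) ^ S.card) :
    (m : ℝ) - t * Real.logb 2 m - 1 ≤
      -Real.logb 2 (Finset.univ.sup' Finset.univ_nonempty μ) := by
  have hpoint : ∀ z, μ z ≤ 2 * (m : ℝ) ^ t / 2 ^ m := by
    simpa using BoolCube.le_two_mul_pow_div_of_abs_walshCoeff_le (by simpa using hm) hμ0 hμ1
      (by simpa [← sub_prParity_eq_walshCoeff] using hbias)
  set M := Finset.univ.sup' Finset.univ_nonempty μ
  have hMpos : 0 < M := by
    obtain ⟨z, -, hz⟩ :=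
      Finset.exists_lt_of_sum_lt (s := Finset.univ) (f := 0) (g := μ) (by simp [hμ1])
    exact hz.trans_le (Finset.le_sup' μ (Finset.mem_univ z))
  have hMle : M ≤ 2 * (m : ℝ) ^ t / 2 ^ m := Finset.sup'_le _ _ fun z _ => hpoint z
  have hlog : Real.logb 2 (2 * (m : ℝ) ^ t / 2 ^ m) = 1 + t * Real.logb 2 m - m := by
    rw [div_eq_mul_inv, Real.logb_mul (by positivity) (by positivity),
      Real.logb_mul (by norm_num) (by positivity), Real.logb_inv, Real.logb_pow, Real.logb_pow,
      Real.logb_self_eq_one one_lt_two]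
    ring
  linarith [Real.logb_le_logb_of_le one_lt_two hMpos hMle]
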